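/- Let X be a real Hilbert space with inner product and norm, and let Y be a Banach space continuously embedded in X such that the Y-norm satisfies ‖y‖_Y ≤ ‖y‖_X + N(y) for some seminorm N on Y. Then for every y ∈ Y, ‖y‖_X² ≤ 2‖y‖_{Y'}·N(y) + ‖y‖_{Y'}², where ‖y‖_{Y'} = sup over z ∈ Y with ‖z‖_Y ≤ 1 of |⟨y, z⟩_X|. (This is the abstract form of Lemma 2.1: ‖(ζ,ξ)‖²_{L²} ≤ 2‖(ζ,ξ)‖_{(H¹)'}‖(∇ζ,∇_Γξ)‖_{L²} + ‖(ζ,ξ)‖²_{(H¹)'}.) -/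
import Mathlib


open RealInnerProductSpace

/-- Abstract form of Lemma 2.1: in a real Hilbert space `X` with a subspace `Y`
whose norm is dominated by `‖·‖_X + N(·)` for a seminorm `N`, one has
`‖y‖_X² ≤ 2‖y‖_{Y'}·N(y) + ‖y‖_{Y'}²` where `‖y‖_{Y'}` is the dual-type norm. -/
theorem stmt0 {X : Type*} [NormedAddCommGroup X] [InnerProductSpace ℝ X]
    (Y : Submodule ℝ X) (normY : Seminorm ℝ X) (N : Seminorm ℝ X)
    (hnormY : ∀ y ∈ Y, normY y ≤ ‖y‖ + N y)
    (y : X) (hy : y ∈ Y)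
    (hbdd : BddAbove {r : ℝ | ∃ z ∈ Y, normY z ≤ 1 ∧ r = abs ⟪y, z⟫}) :
    ‖y‖ ^ 2 ≤ 2 * sSup {r : ℝ | ∃ z ∈ Y, normY z ≤ 1 ∧ r = abs ⟪y, z⟫} * N y
      + sSup {r : ℝ | ∃ z ∈ Y, normY z ≤ 1 ∧ r = abs ⟪y, z⟫} ^ 2 := by
  set s : Set ℝ := {r : ℝ | ∃ z ∈ Y, normY z ≤ 1 ∧ r = abs ⟪y, z⟫} with hs
  set S : ℝ := sSup s with hS
  by_cases hy0 : y = 0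
  · have h0 : (0 : ℝ) ∈ s := ⟨0, Y.zero_mem, by simp, by simp⟩
    have hS0 : 0 ≤ S := le_csSup hbdd h0
    have hN0 : N y = 0 := by simp [hy0]
    have : (0:ℝ) ≤ 2 * S * N y + S ^ 2 := by positivity
    simpa [hy0] using this
  · have hny : 0 < ‖y‖ := norm_pos_iff.mpr hy0
    by_cases hc : normY y = 0
    · -- contradiction with boundedness
      exfalso
      obtain ⟨M, hM⟩ := hbdd
      have key : ∀ t : ℝ, 0 ≤ t → t * ‖y‖ ^ 2 ≤ M := by
        intro t ht
        have hmem : t * ‖y‖ ^ 2 ∈ s := by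
          refine ⟨t • y, Y.smul_mem t hy, ?_, ?_⟩
          · rw [map_smul_eq_mul, hc]; simp
          · rw [real_inner_smul_right, real_inner_self_eq_norm_sq]
            rw [abs_of_nonneg (mul_nonneg ht (sq_nonneg _))]
        exact hM hmem
      have h0M : (0:ℝ) ≤ M := hM ⟨0, Y.zero_mem, by simp, by simp⟩
      have h1 := key ((M + 1) / ‖y‖ ^ 2) (div_nonneg (by linarith) (sq_nonneg _))
      rw [div_mul_cancel₀ _ (ne_of_gt (by positivity : (0:ℝ) < ‖y‖^2))] at h1
      linarith
    · have hc' : 0 < normY y := lt_of_le_of_ne (apply_nonneg _ _) (Ne.symm hc)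
      have hmem : ‖y‖ ^ 2 / normY y ∈ s := by
        refine ⟨(normY y)⁻¹ • y, Y.smul_mem _ hy, ?_, ?_⟩
        · rw [map_smul_eq_mul, Real.norm_eq_abs, abs_of_nonneg (by positivity), inv_mul_cancel₀ hc]
        · rw [real_inner_smul_right, real_inner_self_eq_norm_sq,
            abs_of_nonneg (mul_nonneg (inv_nonneg.mpr hc'.le) (sq_nonneg _))]
          field_simp
      have hle : ‖y‖ ^ 2 / normY y ≤ S := le_csSup hbdd hmem
      have h1 : ‖y‖ ^ 2 ≤ S * normY y := by
        rw [div_le_iff₀ hc'] at hle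
        linarith
      have hS0 : 0 ≤ S := by
        have : 0 ≤ ‖y‖ ^ 2 / normY y := by positivity
        linarith [le_csSup hbdd hmem]
      have h2 : S * normY y ≤ S * (‖y‖ + N y) :=
        mul_le_mul_of_nonneg_left (hnormY y hy) hS0
      have h3 : S * ‖y‖ ≤ S ^ 2 / 2 + ‖y‖ ^ 2 / 2 := by
        nlinarith [sq_nonneg (S - ‖y‖)]
      nlinarith
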